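/- arXiv:2107.10817 — 10 statements merged into one kernel-verified Lean document; each statement's English description precedes it below -/
import Mathlib

section
/- If a hidden-variable team Y supports parameter independence and weak determinism, then Y supports strong determinism. -/
/-- A hidden-variable team: a set of assignments `(a, b, c)` where `a` gives the
measurement values, `b` the outcome values and `c` the hidden-variable value. -/
abbrev HVTeam (n : ℕ) (A B C : Type) := Set ((Fin n → A) × (Fin n → B) × C)

/-- Parameter independence. -/
def ParameterIndependence {n : ℕ} {A B C : Type} (Y : HVTeam n A B C) : Prop :=
  ∀ i : Fin n, ∀ s ∈ Y, ∀ s' ∈ Y, s.1 i = s'.1 i → s.2.2 = s'.2.2 →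
    ∃ s'' ∈ Y, (∀ j, s''.1 j = s.1 j) ∧ s''.2.2 = s.2.2 ∧ s''.2.1 i = s'.2.1 i

/-- Weak determinism: the measurements together with the hidden variable
determine all outcomes. -/
def WeakDeterminism {n : ℕ} {A B C : Type} (Y : HVTeam n A B C) : Prop :=
  ∀ s ∈ Y, ∀ s' ∈ Y, (∀ i, s.1 i = s'.1 i) → s.2.2 = s'.2.2 →
    ∀ i, s.2.1 i = s'.2.1 i

/-- Strong determinism: each measurement together with the hidden variable
determines the corresponding outcome. -/
def StrongDeterminism {n : ℕ} {A B C : Type} (Y : HVTeam n A B C) : Prop :=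
  ∀ i : Fin n, ∀ s ∈ Y, ∀ s' ∈ Y, s.1 i = s'.1 i → s.2.2 = s'.2.2 →
    s.2.1 i = s'.2.1 i

/-- If a hidden-variable team supports parameter independence and weak
determinism, then it supports strong determinism. -/
theorem parameterIndependence_and_weakDeterminism_implies_strongDeterminism
    {n : ℕ} (hn : 1 ≤ n) {A B C : Type} [Nonempty A] [Nonempty B] [Nonempty C]
    (Y : HVTeam n A B C) (hPI : ParameterIndependence Y) (hWD : WeakDeterminism Y) :
    StrongDeterminism Y := by
  intro i s hs s' hs' hx hz
  obtain ⟨s'', hs'', hx'', hz'', hy''⟩ := hPI i s hs s' hs' hx hz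
  have := hWD s hs s'' hs'' (fun j => (hx'' j).symm) hz''.symm i
  rw [this, hy'']
end

section
/- A hidden-variable team Y supports locality if and only if it supports both parameter independence and outcome independence. -/
/-- Locality. -/
def Locality {n : ℕ} {A B C : Type} (Y : HVTeam n A B C) : Prop :=
  ∀ f : Fin n → ((Fin n → A) × (Fin n → B) × C), (∀ i, f i ∈ Y) →
    (∃ s ∈ Y, ∀ i, s.1 i = (f i).1 i ∧ s.2.2 = (f i).2.2) →
    ∃ s' ∈ Y, ∀ i, s'.1 i = (f i).1 i ∧ s'.2.1 i = (f i).2.1 i ∧ s'.2.2 = (f i).2.2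

/-- Outcome independence. -/
def OutcomeIndependence {n : ℕ} {A B C : Type} (Y : HVTeam n A B C) : Prop :=
  ∀ i : Fin n, ∀ s ∈ Y, ∀ s' ∈ Y, (∀ j, s.1 j = s'.1 j) → s.2.2 = s'.2.2 →
    ∃ s'' ∈ Y, (∀ j, s''.1 j = s.1 j) ∧ s''.2.2 = s.2.2 ∧ s''.2.1 i = s.2.1 i ∧
      ∀ j, j ≠ i → s''.2.1 j = s'.2.1 j

/-- A hidden-variable team supports locality if and only if it supports both
parameter independence and outcome independence. -/
theorem locality_iff_parameterIndependence_and_outcomeIndependence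
    {n : ℕ} (hn : 1 ≤ n) {A B C : Type} [Nonempty A] [Nonempty B] [Nonempty C]
    (Y : HVTeam n A B C) :
    Locality Y ↔ ParameterIndependence Y ∧ OutcomeIndependence Y := by
  constructor
  · intro hL
    constructor
    · intro i s hs s' hs' hx hz
      obtain ⟨s'', hs'', h⟩ := hL (fun j => if j = i then s' else s)
        (fun j => by by_cases hj : j = i <;> simp [hj, hs, hs'])
        ⟨s, hs, fun j => by
          by_cases hj : j = i <;> simp [hj]
          exact ⟨hx, hz⟩⟩
      refine ⟨s'', hs'', fun j => ?_, ?_, ?_⟩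
      · by_cases hj : j = i
        · have := (h j).1; simp [hj] at this ⊢; rw [this, ← hx]
        · have := (h j).1; simp [hj] at this; exact this
      · have := (h i).2.2; simp at this; rw [this, ← hz]
      · have := (h i).2.1; simp at this; exact this
    · intro i s hs s' hs' hx hz
      obtain ⟨s'', hs'', h⟩ := hL (fun j => if j = i then s else s')
        (fun j => by by_cases hj : j = i <;> simp [hj, hs, hs'])
        ⟨s, hs, fun j => by
          by_cases hj : j = i <;> simp [hj]
          exact ⟨hx j, hz⟩⟩
      refine ⟨s'', hs'', fun j => ?_, ?_, ?_, ?_⟩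
      · by_cases hj : j = i
        · have := (h j).1; simp [hj] at this ⊢; exact this
        · have := (h j).1; simp [hj] at this; rw [this, ← hx j]
      · have := (h i).2.2; simp at this; exact this
      · have := (h i).2.1; simp at this; exact this
      · intro j hj
        have := (h j).2.1; simp [hj] at this; exact this
  · rintro ⟨hPI, hOI⟩ f hf ⟨s, hs, hsf⟩
    have key : ∀ m, m ≤ n → ∃ t ∈ Y, (∀ j, t.1 j = s.1 j) ∧ t.2.2 = s.2.2 ∧
        ∀ j : Fin n, (j : ℕ) < m → t.2.1 j = (f j).2.1 j := by
      intro m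
      induction m with
      | zero => exact fun _ => ⟨s, hs, fun _ => rfl, rfl, fun j hj => absurd hj (by omega)⟩
      | succ m ih =>
        intro hm
        obtain ⟨t, ht, htx, htz, hty⟩ := ih (by omega)
        set i : Fin n := ⟨m, by omega⟩ with hi
        obtain ⟨v, hv, hvx, hvz, hvy⟩ := hPI i t ht (f i) (hf i)
          (by rw [htx]; exact (hsf i).1) (by rw [htz]; exact (hsf i).2)
        obtain ⟨w, hw, hwx, hwz, hwyi, hwyj⟩ := hOI i v hv t ht (fun j => hvx j) hvz
        refine ⟨w, hw, fun j => (hwx j).trans ((hvx j).trans (htx j)),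
          hwz.trans (hvz.trans htz), fun j hj => ?_⟩
        by_cases hji : j = i
        · subst hji; exact hwyi.trans hvy
        · exact (hwyj j hji).trans (hty j (by
            have : (j : ℕ) ≠ m := fun h => hji (Fin.ext h)
            omega))
    obtain ⟨t, ht, h1, h2, h3⟩ := key n le_rfl
    exact ⟨t, ht, fun i => ⟨(h1 i).trans (hsf i).1, h3 i i.2, h2.trans (hsf i).2⟩⟩
end

section
/- For every empirical team X and every c₀ ∈ C, the hidden-variable team Y = {(a, b, c₀) | (a, b) ∈ X} realizes X and supports single-valuedness. In particular, every empirical team is realized by a hidden-variable team supporting single-valuedness. -/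
/-- An empirical team: a set of assignments `(a, b)`. -/
abbrev EmpTeam (n : ℕ) (A B : Type) := Set ((Fin n → A) × (Fin n → B))

/-- A hidden-variable team `Y` realizes an empirical team `X`. -/
def Realizes {n : ℕ} {A B C : Type} (Y : HVTeam n A B C) (X : EmpTeam n A B) : Prop :=
  X = {ab | ∃ c, (ab.1, ab.2, c) ∈ Y}

/-- Single-valuedness: the hidden variable takes only one value. -/
def SingleValuedness {n : ℕ} {A B C : Type} (Y : HVTeam n A B C) : Prop :=
  ∀ s ∈ Y, ∀ s' ∈ Y, s.2.2 = s'.2.2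

/-- For every empirical team `X` and every `c₀ ∈ C`, the hidden-variable team
`Y = {(a, b, c₀) | (a, b) ∈ X}` realizes `X` and supports single-valuedness. -/
theorem realized_by_singleValued_team
    {n : ℕ} (hn : 1 ≤ n) {A B C : Type} [Nonempty A] [Nonempty B] [Nonempty C]
    (X : EmpTeam n A B) (c₀ : C) :
    Realizes {s : (Fin n → A) × (Fin n → B) × C | (s.1, s.2.1) ∈ X ∧ s.2.2 = c₀} X ∧
    SingleValuedness {s : (Fin n → A) × (Fin n → B) × C | (s.1, s.2.1) ∈ X ∧ s.2.2 = c₀} := by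
  constructor
  · ext ab
    constructor
    · intro h; exact ⟨c₀, h, rfl⟩
    · rintro ⟨c, h, -⟩; exact h
  · rintro s ⟨-, hs⟩ s' ⟨-, hs'⟩; rw [hs, hs']
end

section
/- An empirical team X supports no-signalling if and only if there exist a nonempty type C and a hidden-variable team Y ⊆ (Fin n → A) × (Fin n → B) × C that realizes X and supports both z-independence and parameter independence. -/
/-- No-signalling for an empirical team. -/
def NoSignalling {n : ℕ} {A B : Type} (X : EmpTeam n A B) : Prop :=
  ∀ i : Fin n, ∀ s ∈ X, ∀ s' ∈ X, s.1 i = s'.1 i →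
    ∃ s'' ∈ X, (∀ j, s''.1 j = s.1 j) ∧ s''.2 i = s'.2 i

/-- z-independence: the hidden variable is independent of the measurements. -/
def ZIndependence {n : ℕ} {A B C : Type} (Y : HVTeam n A B C) : Prop :=
  ∀ s ∈ Y, ∀ s' ∈ Y, ∃ s'' ∈ Y, s''.2.2 = s.2.2 ∧ ∀ i, s''.1 i = s'.1 i

/-- An empirical team supports no-signalling if and only if it is realized by
some hidden-variable team supporting z-independence and parameter independence. -/
theorem noSignalling_iff_realized_by_zIndependent_parameterIndependent_team
    {n : ℕ} (hn : 1 ≤ n) {A B : Type} [Nonempty A] [Nonempty B]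
    (X : EmpTeam n A B) :
    NoSignalling X ↔
      ∃ (C : Type) (_ : Nonempty C) (Y : HVTeam n A B C),
        Realizes Y X ∧ ZIndependence Y ∧ ParameterIndependence Y := by
  constructor
  · intro hNS
    refine ⟨Unit, ⟨()⟩, {s | (s.1, s.2.1) ∈ X}, ?_, ?_, ?_⟩
    · ext ab
      exact ⟨fun h => ⟨(), h⟩, fun ⟨c, h⟩ => h⟩
    · intro s hs s' hs'
      exact ⟨(s'.1, s'.2.1, s.2.2), hs', rfl, fun i => rfl⟩
    · intro i s hs s' hs' hx hz
      obtain ⟨t, ht, htx, hty⟩ := hNS i (s.1, s.2.1) hs (s'.1, s'.2.1) hs' hx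
      exact ⟨(t.1, t.2, s.2.2), ht, htx, rfl, hty⟩
  · rintro ⟨C, ⟨c0⟩, Y, hR, hZ, hP⟩
    intro i s hs s' hs' hx
    rw [hR] at hs hs'
    obtain ⟨c, hc⟩ := hs
    obtain ⟨c', hc'⟩ := hs'
    obtain ⟨t, ht, htz, htx⟩ := hZ (s'.1, s'.2, c') hc' (s.1, s.2, c) hc
    obtain ⟨u, hu, hux, huz, huy⟩ := hP i t ht (s'.1, s'.2, c') hc'
      (by rw [htx i]; exact hx) htz
    refine ⟨(u.1, u.2.1), ?_, fun j => by rw [hux j, htx j], huy⟩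
    rw [hR]
    exact ⟨u.2.2, hu⟩
end

section
/- For every empirical team X there exist a nonempty type C and a hidden-variable team Y ⊆ (Fin n → A) × (Fin n → B) × C such that Y realizes X and supports strong determinism. -/
/-- Every empirical team is realized by a hidden-variable team supporting
strong determinism. -/
theorem realized_by_strongly_deterministic_team
    {n : ℕ} (hn : 1 ≤ n) {A B : Type} [Nonempty A] [Nonempty B]
    (X : EmpTeam n A B) :
    ∃ (C : Type) (_ : Nonempty C) (Y : HVTeam n A B C),
      Realizes Y X ∧ StrongDeterminism Y := by
  refine ⟨Fin n → B, inferInstance, {s | (s.1, s.2.1) ∈ X ∧ s.2.2 = s.2.1}, ?_, ?_⟩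
  · ext ab
    constructor
    · intro h; exact ⟨ab.2, h, rfl⟩
    · rintro ⟨c, h, _⟩; exact h
  · rintro i ⟨a, b, c⟩ ⟨_, hc⟩ ⟨a', b', c'⟩ ⟨_, hc'⟩ _ hcc
    simp only at hc hc' hcc ⊢
    rw [← hc, ← hc', hcc]
end

section
/- For every empirical team X there exist a nonempty type C and a hidden-variable team Y ⊆ (Fin n → A) × (Fin n → B) × C such that Y realizes X and supports both weak determinism and z-independence. -/
/-- Every empirical team is realized by a hidden-variable team supporting weak
determinism and z-independence. -/
theorem realized_by_weakly_deterministic_zIndependent_team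
    {n : ℕ} (hn : 1 ≤ n) {A B : Type} [Nonempty A] [Nonempty B]
    (X : EmpTeam n A B) :
    ∃ (C : Type) (_ : Nonempty C) (Y : HVTeam n A B C),
      Realizes Y X ∧ WeakDeterminism Y ∧ ZIndependence Y := by
  classical
  refine ⟨{c : (Fin n → A) → (Fin n → B) // ∀ a, (∃ b, (a, b) ∈ X) → (a, c a) ∈ X},
    ⟨⟨fun a => if h : ∃ b, (a, b) ∈ X then h.choose else Classical.arbitrary _,
      fun a h => by simp only [dif_pos h]; exact h.choose_spec⟩⟩,
    {s | s.2.1 = s.2.2.1 s.1 ∧ (s.1, s.2.1) ∈ X}, ?_, ?_, ?_⟩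
  · ext ab
    constructor
    · intro hab
      refine ⟨⟨fun a => if a = ab.1 then ab.2 else
          (if h : ∃ b, (a, b) ∈ X then h.choose else Classical.arbitrary _), ?_⟩, ?_, hab⟩
      · intro a h
        by_cases ha : a = ab.1
        · simpa [ha] using hab
        · simp only [if_neg ha, dif_pos h]; exact h.choose_spec
      · simp
    · rintro ⟨c, _, hX⟩
      exact hX
  · rintro ⟨a, b, c⟩ ⟨hb, _⟩ ⟨a', b', c'⟩ ⟨hb', _⟩ ha hc i
    have : a = a' := funext ha
    subst this
    rw [hb, hb', hc]
  · rintro ⟨a, b, c⟩ hs ⟨a', b', c'⟩ hs'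
    refine ⟨(a', c.1 a', c), ⟨rfl, c.2 a' ⟨b', hs'.2⟩⟩, rfl, fun i => rfl⟩
end

section
/- Let Y ⊆ (Fin n → A) × (Fin n → B) × C be a hidden-variable team supporting z-independence and locality. Then there exist a nonempty type C' and a hidden-variable team Y' ⊆ (Fin n → A) × (Fin n → B) × C' supporting z-independence and strong determinism such that Y and Y' realize the same empirical team, i.e. {(a, b) | ∃ c, (a, b, c) ∈ Y} = {(a, b) | ∃ c', (a, b, c') ∈ Y'}. -/
/-- Key lemma: if `g` is pointwise realizable with hidden value `c`, then by
locality every measurement tuple realized with `c` is jointly realized with the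
outcomes prescribed by `g`. -/
lemma HVTeam.key {n : ℕ} (hn : 1 ≤ n) {A B C : Type} (Y : HVTeam n A B C)
    (hLoc : Locality Y) (c : C) (g : Fin n → A → B)
    (hg : ∀ i x, (∃ s ∈ Y, s.1 i = x ∧ s.2.2 = c) →
      ∃ s ∈ Y, s.1 i = x ∧ s.2.2 = c ∧ s.2.1 i = g i x) :
    ∀ a' : Fin n → A, (∃ b0, (a', b0, c) ∈ Y) →
      (a', fun i => g i (a' i), c) ∈ Y := by
  intro a' ⟨b0, hb0⟩
  have hw : ∀ i, ∃ s ∈ Y, s.1 i = a' i ∧ s.2.2 = c ∧ s.2.1 i = g i (a' i) :=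
    fun i => hg i (a' i) ⟨(a', b0, c), hb0, rfl, rfl⟩
  choose f hfY hf1 hf3 hf2 using hw
  obtain ⟨s', hs'Y, hs'⟩ := hLoc f hfY
    ⟨(a', b0, c), hb0, fun i => ⟨(hf1 i).symm, (hf3 i).symm⟩⟩
  obtain ⟨s1, s2, s3⟩ := s'
  have h1 : s1 = a' := funext fun i => (hs' i).1.trans (hf1 i)
  have h2 : s2 = fun i => g i (a' i) := funext fun i => (hs' i).2.1.trans (hf2 i)
  have h3 : s3 = c := (hs' ⟨0, hn⟩).2.2.trans (hf3 ⟨0, hn⟩)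
  subst h1 h2 h3
  exact hs'Y

/-- Every hidden-variable team supporting z-independence and locality is
empirically equivalent to a hidden-variable team supporting z-independence
and strong determinism. -/
theorem zIndependent_local_team_equivalent_to_zIndependent_strongly_deterministic_team
    {n : ℕ} (hn : 1 ≤ n) {A B C : Type} [Nonempty A] [Nonempty B] [Nonempty C]
    (Y : HVTeam n A B C) (hzI : ZIndependence Y) (hLoc : Locality Y) :
    ∃ (C' : Type) (_ : Nonempty C') (Y' : HVTeam n A B C'),
      ZIndependence Y' ∧ StrongDeterminism Y' ∧
      {ab : (Fin n → A) × (Fin n → B) | ∃ c, (ab.1, ab.2, c) ∈ Y} =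
        {ab : (Fin n → A) × (Fin n → B) | ∃ c', (ab.1, ab.2, c') ∈ Y'} := by
  classical
  refine ⟨C × (Fin n → A → B), inferInstance,
    {s | (∀ a' : Fin n → A, (∃ b0, (a', b0, s.2.2.1) ∈ Y) →
        (a', fun i => s.2.2.2 i (a' i), s.2.2.1) ∈ Y) ∧
      (∃ b0, (s.1, b0, s.2.2.1) ∈ Y) ∧ s.2.1 = fun i => s.2.2.2 i (s.1 i)},
    ?_, ?_, ?_⟩
  · -- z-independence
    rintro ⟨a, b, c, g⟩ ⟨hadm, ⟨b1, hb1⟩, hb⟩ ⟨a', b', c', g'⟩ ⟨hadm', ⟨b1', hb1'⟩, hb'⟩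
    obtain ⟨s'', hs''Y, hs''c, hs''a⟩ := hzI (a, b1, c) hb1 (a', b1', c') hb1'
    obtain ⟨sa, sb, sc⟩ := s''
    have ha'c : ∃ b0, (a', b0, c) ∈ Y := by
      have e1 : sa = a' := funext hs''a
      have e2 : sc = c := hs''c
      subst e1 e2
      exact ⟨sb, hs''Y⟩
    exact ⟨(a', fun i => g i (a' i), c, g),
      ⟨hadm, ha'c, rfl⟩, rfl, fun i => rfl⟩
  · -- strong determinism
    rintro i ⟨a, b, cg⟩ ⟨-, -, hb⟩ ⟨a', b', cg'⟩ ⟨-, -, hb'⟩ ha hcg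
    have hb2 : b = fun i => cg.2 i (a i) := hb
    have hb2' : b' = fun i => cg'.2 i (a' i) := hb'
    show b i = b' i
    rw [hb2, hb2']
    simp only
    rw [show cg = cg' from hcg, show a i = a' i from ha]
  · -- same empirical team
    ext ⟨a, b⟩
    simp only [Set.mem_setOf_eq]
    constructor
    · rintro ⟨c, hc⟩
      set g : Fin n → A → B := fun i x =>
        if x = a i then b i
        else if h : ∃ s ∈ Y, s.1 i = x ∧ s.2.2 = c then h.choose.2.1 i
        else Classical.arbitrary B with hgdef
      have hg : ∀ i x, (∃ s ∈ Y, s.1 i = x ∧ s.2.2 = c) →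
          ∃ s ∈ Y, s.1 i = x ∧ s.2.2 = c ∧ s.2.1 i = g i x := by
        intro i x h
        by_cases hx : x = a i
        · exact ⟨(a, b, c), hc, hx.symm, rfl, by simp [hgdef, hx]⟩
        · refine ⟨h.choose, h.choose_spec.1, h.choose_spec.2.1, h.choose_spec.2.2, ?_⟩
          rw [hgdef]
          simp only [hx, if_false, dif_pos h]
      have hadm := HVTeam.key hn Y hLoc c g hg
      have hba : b = fun i => g i (a i) := funext fun i => by simp [hgdef]
      exact ⟨(c, g), hadm, ⟨b, hc⟩, hba⟩
    · rintro ⟨⟨c, g⟩, hadm, hrc, hb⟩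
      exact ⟨c, hb ▸ hadm a hrc⟩
end

section
/- (EPR no-go theorem) Let n = 2 and A = B = Fin 2, and let X be the empirical team consisting of exactly the two assignments with (x₀, x₁, y₀, y₁) equal to (0, 1, 0, 1) and (0, 1, 1, 0). Then for every nonempty type C there is no hidden-variable team Y ⊆ (Fin 2 → Fin 2) × (Fin 2 → Fin 2) × C that realizes X and supports both single-valuedness and outcome independence. -/
/-- The EPR team: (x₀, x₁, y₀, y₁) ∈ {(0, 1, 0, 1), (0, 1, 1, 0)}. -/
def EPRTeam : EmpTeam 2 (Fin 2) (Fin 2) :=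
  {(![0, 1], ![0, 1]), (![0, 1], ![1, 0])}

/-- EPR no-go theorem: the EPR team is not realized by any hidden-variable team
supporting single-valuedness and outcome independence. -/
theorem epr_no_go (C : Type) [Nonempty C] :
    ¬ ∃ Y : HVTeam 2 (Fin 2) (Fin 2) C,
        Realizes Y EPRTeam ∧ SingleValuedness Y ∧ OutcomeIndependence Y := by
  rintro ⟨Y, hR, hSV, hOI⟩
  have h1 : (![0, 1], ![0, 1]) ∈ EPRTeam := Or.inl rfl
  have h2 : (![0, 1], ![1, 0]) ∈ EPRTeam := Or.inr rfl
  rw [hR] at h1 h2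
  obtain ⟨c, hc⟩ := h1
  obtain ⟨c', hc'⟩ := h2
  have hcc : c = c' := hSV _ hc _ hc'
  subst hcc
  obtain ⟨s'', hs''Y, ha, hz, hy0, hy1⟩ :=
    hOI 0 _ hc _ hc' (fun j => rfl) rfl
  have hmem : (s''.1, s''.2.1) ∈ EPRTeam := by
    rw [hR]; exact ⟨s''.2.2, hs''Y⟩
  have ha' : s''.1 = ![0, 1] := funext ha
  have h0 : s''.2.1 0 = 0 := hy0
  have h1' : s''.2.1 1 = 0 := hy1 1 (by decide)
  rcases hmem with h | h
  · have := congrArg (fun p => p.2 1) h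
    simp only at this
    rw [h1'] at this
    exact absurd this (by decide)
  · have := congrArg (fun p => p.2 0) h
    simp only at this
    rw [h0] at this
    exact absurd this (by decide)
end

section
/- The probabilistic conditional independence atom satisfies the axioms of the independence atom: for every probabilistic team 𝕏 over finite V and A, and all tuples of variables x⃗, y⃗, z⃗, u⃗ and single variables y', z' from V: (1) Constancy: if 𝕏 satisfies y⃗ ⟂⟂_{x⃗} y⃗ then 𝕏 satisfies y⃗ ⟂⟂_{x⃗} z⃗; (2) Reflexivity: 𝕏 satisfies x⃗ ⟂⟂_{x⃗} y⃗; (3) Symmetry: if 𝕏 satisfies z⃗ ⟂⟂_{x⃗} y⃗ then 𝕏 satisfies y⃗ ⟂⟂_{x⃗} z⃗; (4) Weakening: if 𝕏 satisfies y⃗y' ⟂⟂_{x⃗} z⃗z' then 𝕏 satisfies y⃗ ⟂⟂_{x⃗} z⃗; (5) Permutation: if x⃗', y⃗', z⃗' are permutations of x⃗, y⃗, z⃗ respectively and 𝕏 satisfies y⃗ ⟂⟂_{x⃗} z⃗, then 𝕏 satisfies y⃗' ⟂⟂_{x⃗'} z⃗'; (6) Fixed Parameter: if 𝕏 satisfies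 z⃗ ⟂⟂_{x⃗} y⃗ then 𝕏 satisfies y⃗x⃗ ⟂⟂_{x⃗} z⃗x⃗; (7) First Transitivity: if 𝕏 satisfies x⃗ ⟂⟂_{z⃗} y⃗ and u⃗ ⟂⟂_{z⃗x⃗} y⃗ then 𝕏 satisfies u⃗ ⟂⟂_{z⃗} y⃗; (8) Second Transitivity: if 𝕏 satisfies y⃗ ⟂⟂_{z⃗} y⃗ and z⃗x⃗ ⟂⟂_{y⃗} u⃗ then 𝕏 satisfies x⃗ ⟂⟂_{z⃗} u⃗; (9) Exchange: if 𝕏 satisfies x⃗ ⟂⟂_{z⃗} y⃗ and x⃗y⃗ ⟂⟂_{z⃗} u⃗ then 𝕏 satisfies x⃗ ⟂⟂_{z⃗} y⃗u⃗. -/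
open Classical in
/-- The marginal probability `|𝕏_{u=a}|`: the probability that the variable
tuple `u` takes the value tuple `a`. -/
noncomputable def marg {V A : Type} [Fintype V] [Fintype A]
    (𝕏 : (V → A) → ℝ) {k : ℕ} (u : Fin k → V) (a : Fin k → A) : ℝ :=
  ∑ s ∈ Finset.univ.filter (fun s : V → A => ∀ j, s (u j) = a j), 𝕏 s

/-- `𝕏` satisfies the probabilistic conditional independence atom `u ⟂⟂_v w`. -/
def PCI {V A : Type} [Fintype V] [Fintype A] (𝕏 : (V → A) → ℝ)
    {k l m : ℕ} (u : Fin k → V) (v : Fin l → V) (w : Fin m → V) : Prop :=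
  ∀ (a : Fin k → A) (b : Fin l → A) (c : Fin m → A),
    marg 𝕏 (Fin.append u v) (Fin.append a b) * marg 𝕏 (Fin.append v w) (Fin.append b c) =
      marg 𝕏 (Fin.append (Fin.append u v) w) (Fin.append (Fin.append a b) c) * marg 𝕏 v b

namespace PCIproof

set_option linter.unusedSectionVars false

variable {V A : Type} [Fintype V] [Fintype A]

/-- condition: tuple `u` takes value `a` under `s` -/
def C {k : ℕ} (u : Fin k → V) (a : Fin k → A) (s : V → A) : Prop :=
  ∀ j, s (u j) = a j

open Classical in
noncomputable def M (𝕏 : (V → A) → ℝ) (P : (V → A) → Prop) : ℝ :=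
  ∑ s ∈ Finset.univ.filter P, 𝕏 s

open Classical in
lemma marg_eq_M (𝕏 : (V → A) → ℝ) {k : ℕ} (u : Fin k → V) (a : Fin k → A) :
    marg 𝕏 u a = M 𝕏 (C u a) := by
  unfold marg M C
  exact Finset.sum_congr (by convert rfl) (fun _ _ => rfl)

lemma M_congr (𝕏 : (V → A) → ℝ) {P Q : (V → A) → Prop} (h : ∀ s, P s ↔ Q s) :
    M 𝕏 P = M 𝕏 Q := by
  unfold M
  congr 1
  ext s
  simp [h s]

lemma M_nonneg (𝕏 : (V → A) → ℝ) (hpos : ∀ s, 0 ≤ 𝕏 s) (P : (V → A) → Prop) :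
    0 ≤ M 𝕏 P :=
  Finset.sum_nonneg fun s _ => hpos s

lemma M_mono (𝕏 : (V → A) → ℝ) (hpos : ∀ s, 0 ≤ 𝕏 s) {P Q : (V → A) → Prop}
    (h : ∀ s, P s → Q s) : M 𝕏 P ≤ M 𝕏 Q := by
  classical
  apply Finset.sum_le_sum_of_subset_of_nonneg
  · intro s hs
    simp only [Finset.mem_filter, Finset.mem_univ, true_and] at *
    exact h s hs
  · intro s _ _; exact hpos s

lemma M_le_zero (𝕏 : (V → A) → ℝ) (hpos : ∀ s, 0 ≤ 𝕏 s) {P Q : (V → A) → Prop}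
    (h : ∀ s, P s → Q s) (hQ : M 𝕏 Q = 0) : M 𝕏 P = 0 :=
  le_antisymm (hQ ▸ M_mono 𝕏 hpos h) (M_nonneg 𝕏 hpos P)

lemma M_of_false (𝕏 : (V → A) → ℝ) {P : (V → A) → Prop} (h : ∀ s, ¬ P s) :
    M 𝕏 P = 0 := by
  classical
  unfold M
  rw [Finset.filter_false_of_mem (fun s _ => h s), Finset.sum_empty]

/-- splitting over the values of a tuple -/
lemma M_split (𝕏 : (V → A) → ℝ) (P : (V → A) → Prop) {k : ℕ} (x : Fin k → V) :
    M 𝕏 P = ∑ c : Fin k → A, M 𝕏 (fun s => P s ∧ C x c s) := by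
  classical
  unfold M C
  simp only [Finset.sum_filter]
  rw [Finset.sum_comm]
  apply Finset.sum_congr rfl
  intro s _
  by_cases hP : P s
  · rw [Finset.sum_eq_single (fun j => s (x j))]
    · simp [hP]
    · intro c _ hc
      rw [if_neg]
      rintro ⟨-, h2⟩
      exact hc (by funext j; exact (h2 j).symm)
    · simp
  · simp [hP]

/-- splitting over the values of a single variable -/
lemma M_split1 (𝕏 : (V → A) → ℝ) (P : (V → A) → Prop) (v : V) :
    M 𝕏 P = ∑ d : A, M 𝕏 (fun s => P s ∧ s v = d) := by
  classical
  unfold M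
  simp only [Finset.sum_filter]
  rw [Finset.sum_comm]
  apply Finset.sum_congr rfl
  intro s _
  by_cases hP : P s
  · rw [Finset.sum_eq_single (s v)]
    · simp [hP]
    · intro d _ hd
      rw [if_neg]
      rintro ⟨-, h⟩
      exact hd h.symm
    · simp
  · simp [hP]

lemma C_append {k l : ℕ} (u : Fin k → V) (v : Fin l → V) (d : Fin (k + l) → A)
    (s : V → A) :
    C (Fin.append u v) d s ↔
      C u (fun j => d (Fin.castAdd l j)) s ∧ C v (fun j => d (Fin.natAdd k j)) s := by
  constructor
  · intro h
    exact ⟨fun j => by simpa [Fin.append_left] using h (Fin.castAdd l j),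
      fun j => by simpa [Fin.append_right] using h (Fin.natAdd k j)⟩
  · rintro ⟨h1, h2⟩ j
    refine Fin.addCases ?_ ?_ j
    · intro i; simpa [Fin.append_left] using h1 i
    · intro i; simpa [Fin.append_right] using h2 i

lemma C_append' {k l : ℕ} (u : Fin k → V) (v : Fin l → V) (a : Fin k → A)
    (b : Fin l → A) (s : V → A) :
    C (Fin.append u v) (Fin.append a b) s ↔ C u a s ∧ C v b s := by
  rw [C_append]
  simp [C, Fin.append_left, Fin.append_right]

lemma C_snoc {k : ℕ} (u : Fin k → V) (v : V) (d : Fin (k + 1) → A) (s : V → A) :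
    C (Fin.snoc u v) d s ↔
      C u (fun j => d j.castSucc) s ∧ s v = d (Fin.last k) := by
  constructor
  · intro h
    exact ⟨fun j => by simpa using h j.castSucc, by simpa using h (Fin.last k)⟩
  · rintro ⟨h1, h2⟩ j
    induction j using Fin.lastCases with
    | last => simpa using h2
    | cast i => simpa using h1 i


lemma C_snoc' {k : ℕ} (u : Fin k → V) (v : V) (a : Fin k → A) (d : A) (s : V → A) :
    C (Fin.snoc u v) (Fin.snoc a d) s ↔ C u a s ∧ s v = d := by
  rw [C_snoc]
  simp [C]

lemma C_comp_perm {k : ℕ} (x : Fin k → V) (π : Equiv.Perm (Fin k)) (a : Fin k → A)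
    (s : V → A) : C (x ∘ π) a s ↔ C x (a ∘ π.symm) s := by
  constructor
  · intro h j
    simpa using h (π.symm j)
  · intro h j
    simpa using h (π j)

lemma C_ne {k : ℕ} (x : Fin k → V) {a a' : Fin k → A} (h : a ≠ a') (s : V → A) :
    ¬ (C x a s ∧ C x a' s) := by
  rintro ⟨h1, h2⟩
  exact h (funext fun j => (h1 j).symm.trans (h2 j))

/-- PCI in terms of `M` and `C` -/
lemma PCI_iff (𝕏 : (V → A) → ℝ) {k l m : ℕ} (u : Fin k → V) (v : Fin l → V)
    (w : Fin m → V) :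
    PCI 𝕏 u v w ↔ ∀ (a : Fin k → A) (b : Fin l → A) (c : Fin m → A),
      M 𝕏 (fun s => C u a s ∧ C v b s) * M 𝕏 (fun s => C v b s ∧ C w c s) =
        M 𝕏 (fun s => C u a s ∧ C v b s ∧ C w c s) * M 𝕏 (C v b) := by
  unfold PCI
  apply forall_congr'; intro a
  apply forall_congr'; intro b
  apply forall_congr'; intro c
  rw [marg_eq_M, marg_eq_M, marg_eq_M, marg_eq_M,
    M_congr 𝕏 (C_append' u v a b), M_congr 𝕏 (C_append' v w b c)]
  have : ∀ s, C (Fin.append (Fin.append u v) w) (Fin.append (Fin.append a b) c) s ↔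
      (C u a s ∧ C v b s ∧ C w c s) := by
    intro s
    rw [C_append', C_append']
    tauto
  rw [M_congr 𝕏 this]


section Axioms

variable (𝕏 : (V → A) → ℝ)

/-- (2) Reflexivity -/
lemma ax2 {k l : ℕ} (x : Fin k → V) (y : Fin l → V) : PCI 𝕏 x x y := by
  rw [PCI_iff]
  intro a b c
  by_cases h : a = b
  · subst h
    rw [M_congr 𝕏 (show ∀ s, (C x a s ∧ C x a s) ↔ C x a s from fun s => by tauto),
      M_congr 𝕏 (show ∀ s, (C x a s ∧ C x a s ∧ C y c s) ↔ (C x a s ∧ C y c s) from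
        fun s => by tauto)]
    ring
  · rw [M_of_false 𝕏 (fun s => C_ne x h s),
      M_of_false 𝕏 (show ∀ s, ¬(C x a s ∧ C x b s ∧ C y c s) from
        fun s hs => C_ne x h s ⟨hs.1, hs.2.1⟩)]
    ring

/-- (3) Symmetry -/
lemma ax3 {k l m : ℕ} (x : Fin k → V) (y : Fin l → V) (z : Fin m → V)
    (h : PCI 𝕏 z x y) : PCI 𝕏 y x z := by
  rw [PCI_iff] at h ⊢
  intro b a c
  have h0 := h c a b
  rw [M_congr 𝕏 (show ∀ s, (C y b s ∧ C x a s) ↔ (C x a s ∧ C y b s) from fun s => by tauto),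
    M_congr 𝕏 (show ∀ s, (C x a s ∧ C z c s) ↔ (C z c s ∧ C x a s) from fun s => by tauto),
    M_congr 𝕏 (show ∀ s, (C y b s ∧ C x a s ∧ C z c s) ↔ (C z c s ∧ C x a s ∧ C y b s) from
      fun s => by tauto)]
  linarith

/-- (5) Permutation -/
lemma ax5 {k l m : ℕ} (x : Fin k → V) (y : Fin l → V) (z : Fin m → V)
    (πx : Equiv.Perm (Fin k)) (πy : Equiv.Perm (Fin l)) (πz : Equiv.Perm (Fin m))
    (h : PCI 𝕏 y x z) : PCI 𝕏 (y ∘ πy) (x ∘ πx) (z ∘ πz) := by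
  rw [PCI_iff] at h ⊢
  intro b a c
  rw [M_congr 𝕏 (fun s => and_congr (C_comp_perm y πy b s) (C_comp_perm x πx a s)),
    M_congr 𝕏 (fun s => and_congr (C_comp_perm x πx a s) (C_comp_perm z πz c s)),
    M_congr 𝕏 (fun s => and_congr (C_comp_perm y πy b s)
      (and_congr (C_comp_perm x πx a s) (C_comp_perm z πz c s))),
    M_congr 𝕏 (fun s => C_comp_perm x πx a s)]
  exact h (b ∘ πy.symm) (a ∘ πx.symm) (c ∘ πz.symm)


/-- (1) Constancy -/
lemma ax1 (hpos : ∀ s, 0 ≤ 𝕏 s) {k l m : ℕ} (x : Fin k → V) (y : Fin l → V) (z : Fin m → V)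
    (h : PCI 𝕏 y x y) : PCI 𝕏 y x z := by
  rw [PCI_iff] at h ⊢
  intro b a c
  by_cases h0 : M 𝕏 (fun s => C y b s ∧ C x a s) = 0
  · have hz2 : M 𝕏 (fun s => C y b s ∧ C x a s ∧ C z c s) = 0 :=
      M_le_zero 𝕏 hpos (fun s hs => ⟨hs.1, hs.2.1⟩) h0
    rw [h0, hz2]
    ring
  · have hz : ∀ b', b' ≠ b → M 𝕏 (fun s => C x a s ∧ C y b' s) = 0 := by
      intro b' hb'
      have h3 : M 𝕏 (fun s => C y b s ∧ C x a s ∧ C y b' s) = 0 :=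
        M_of_false 𝕏 (fun s hs => C_ne y (Ne.symm hb') s ⟨hs.1, hs.2.2⟩)
      have h4 := h b a b'
      rw [h3, zero_mul] at h4
      rcases mul_eq_zero.1 h4 with h' | h'
      · exact absurd h' h0
      · exact h'
    have hXa : M 𝕏 (C x a) = M 𝕏 (fun s => C y b s ∧ C x a s) := by
      rw [M_split 𝕏 (C x a) y, Finset.sum_eq_single b]
      · exact M_congr 𝕏 (fun s => by tauto)
      · intro b' _ hb'
        exact hz b' hb'
      · simp
    have hXZ : M 𝕏 (fun s => C x a s ∧ C z c s) =
        M 𝕏 (fun s => C y b s ∧ C x a s ∧ C z c s) := by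
      rw [M_split 𝕏 (fun s => C x a s ∧ C z c s) y, Finset.sum_eq_single b]
      · exact M_congr 𝕏 (fun s => by tauto)
      · intro b' _ hb'
        exact M_le_zero 𝕏 hpos (fun s hs => ⟨hs.1.1, hs.2⟩) (hz b' hb')
      · simp
    rw [hXa, hXZ]
    ring

/-- (6) Fixed parameter -/
lemma ax6 {k l m : ℕ} (x : Fin k → V) (y : Fin l → V) (z : Fin m → V)
    (h : PCI 𝕏 z x y) : PCI 𝕏 (Fin.append y x) x (Fin.append z x) := by
  rw [PCI_iff] at h ⊢
  intro d a e
  rw [M_congr 𝕏 (fun s => and_congr_left' (C_append y x d s)),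
    M_congr 𝕏 (fun s => and_congr_right' (C_append z x e s)),
    M_congr 𝕏 (fun s => and_congr (C_append y x d s)
      (and_congr_right' (C_append z x e s)))]
  set b : Fin l → A := fun j => d (Fin.castAdd k j) with hb_def
  set b2 : Fin k → A := fun j => d (Fin.natAdd l j) with hb2_def
  set c : Fin m → A := fun j => e (Fin.castAdd k j) with hc_def
  set c2 : Fin k → A := fun j => e (Fin.natAdd m j) with hc2_def
  by_cases hb : b2 = a
  · by_cases hc : c2 = a
    · rw [M_congr 𝕏 (show ∀ s, ((C y b s ∧ C x b2 s) ∧ C x a s) ↔ (C y b s ∧ C x a s) from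
          fun s => by rw [hb]; tauto),
        M_congr 𝕏 (show ∀ s, (C x a s ∧ C z c s ∧ C x c2 s) ↔ (C z c s ∧ C x a s) from
          fun s => by rw [hc]; tauto),
        M_congr 𝕏 (show ∀ s, ((C y b s ∧ C x b2 s) ∧ C x a s ∧ C z c s ∧ C x c2 s) ↔
            (C z c s ∧ C x a s ∧ C y b s) from fun s => by rw [hb, hc]; tauto),
        M_congr 𝕏 (show ∀ s, (C y b s ∧ C x a s) ↔ (C x a s ∧ C y b s) from fun s => by tauto)]
      linarith [h c a b]
    · rw [M_of_false 𝕏 (show ∀ s, ¬(C x a s ∧ C z c s ∧ C x c2 s) from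
          fun s hs => C_ne x hc s ⟨hs.2.2, hs.1⟩),
        M_of_false 𝕏 (show ∀ s, ¬((C y b s ∧ C x b2 s) ∧ C x a s ∧ C z c s ∧ C x c2 s) from
          fun s hs => C_ne x hc s ⟨hs.2.2.2, hs.2.1⟩)]
      ring
  · rw [M_of_false 𝕏 (show ∀ s, ¬((C y b s ∧ C x b2 s) ∧ C x a s) from
        fun s hs => C_ne x hb s ⟨hs.1.2, hs.2⟩),
      M_of_false 𝕏 (show ∀ s, ¬((C y b s ∧ C x b2 s) ∧ C x a s ∧ C z c s ∧ C x c2 s) from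
        fun s hs => C_ne x hb s ⟨hs.1.2, hs.2.1⟩)]
    ring


/-- (4) Weakening -/
lemma ax4 (hpos : ∀ s, 0 ≤ 𝕏 s) {k l m : ℕ} (x : Fin k → V) (y : Fin l → V)
    (z : Fin m → V) (y' z' : V)
    (h : PCI 𝕏 (Fin.snoc y y') x (Fin.snoc z z')) : PCI 𝕏 y x z := by
  rw [PCI_iff] at h ⊢
  intro b a c
  have hde : ∀ d e : A,
      M 𝕏 (fun s => (C y b s ∧ C x a s) ∧ s y' = d) *
        M 𝕏 (fun s => (C x a s ∧ C z c s) ∧ s z' = e) =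
      M 𝕏 (fun s => ((C y b s ∧ C x a s ∧ C z c s) ∧ s y' = d) ∧ s z' = e) *
        M 𝕏 (C x a) := by
    intro d e
    have h0 := h (Fin.snoc b d) a (Fin.snoc c e)
    rw [M_congr 𝕏 (show ∀ s, (C (Fin.snoc y y') (Fin.snoc b d) s ∧ C x a s) ↔
          ((C y b s ∧ C x a s) ∧ s y' = d) from fun s => by rw [C_snoc']; tauto),
      M_congr 𝕏 (show ∀ s, (C x a s ∧ C (Fin.snoc z z') (Fin.snoc c e) s) ↔
          ((C x a s ∧ C z c s) ∧ s z' = e) from fun s => by rw [C_snoc']; tauto),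
      M_congr 𝕏 (show ∀ s,
          (C (Fin.snoc y y') (Fin.snoc b d) s ∧ C x a s ∧ C (Fin.snoc z z') (Fin.snoc c e) s) ↔
          (((C y b s ∧ C x a s ∧ C z c s) ∧ s y' = d) ∧ s z' = e) from
        fun s => by rw [C_snoc', C_snoc']; tauto)] at h0
    exact h0
  have split2 : M 𝕏 (fun s => C y b s ∧ C x a s ∧ C z c s) =
      ∑ d : A, ∑ e : A,
        M 𝕏 (fun s => ((C y b s ∧ C x a s ∧ C z c s) ∧ s y' = d) ∧ s z' = e) := by
    rw [M_split1 𝕏 _ y']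
    exact Finset.sum_congr rfl fun d _ => M_split1 𝕏 _ z'
  rw [M_split1 𝕏 (fun s => C y b s ∧ C x a s) y',
    M_split1 𝕏 (fun s => C x a s ∧ C z c s) z', split2, Finset.sum_mul, Finset.sum_mul]
  apply Finset.sum_congr rfl
  intro d _
  rw [Finset.mul_sum, Finset.sum_mul]
  exact Finset.sum_congr rfl fun e _ => hde d e


/-- (7) First transitivity -/
lemma ax7 (hpos : ∀ s, 0 ≤ 𝕏 s) {k l m p : ℕ} (x : Fin k → V) (y : Fin l → V)
    (z : Fin m → V) (u : Fin p → V)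
    (h1 : PCI 𝕏 x z y) (h2 : PCI 𝕏 u (Fin.append z x) y) : PCI 𝕏 u z y := by
  rw [PCI_iff] at h1 h2 ⊢
  intro d a b
  have h2' : ∀ (c : Fin k → A),
      M 𝕏 (fun s => C u d s ∧ C z a s ∧ C x c s) *
        M 𝕏 (fun s => (C z a s ∧ C x c s) ∧ C y b s) =
      M 𝕏 (fun s => C u d s ∧ (C z a s ∧ C x c s) ∧ C y b s) *
        M 𝕏 (fun s => C z a s ∧ C x c s) := by
    intro c
    have h0 := h2 d (Fin.append a c) b
    rw [M_congr 𝕏 (fun s => and_congr_right' (C_append' z x a c s)),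
      M_congr 𝕏 (fun s => and_congr_left' (C_append' z x a c s)),
      M_congr 𝕏 (fun s => and_congr_right' (and_congr_left' (C_append' z x a c s))),
      M_congr 𝕏 (fun s => C_append' z x a c s)] at h0
    exact h0
  rw [M_split 𝕏 (fun s => C u d s ∧ C z a s) x,
    M_split 𝕏 (fun s => C u d s ∧ C z a s ∧ C y b s) x, Finset.sum_mul, Finset.sum_mul]
  apply Finset.sum_congr rfl
  intro c _
  by_cases h0 : M 𝕏 (fun s => C z a s ∧ C x c s) = 0
  · have z1 : M 𝕏 (fun s => (C u d s ∧ C z a s) ∧ C x c s) = 0 :=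
      M_le_zero 𝕏 hpos (fun s hs => ⟨hs.1.2, hs.2⟩) h0
    have z2 : M 𝕏 (fun s => (C u d s ∧ C z a s ∧ C y b s) ∧ C x c s) = 0 :=
      M_le_zero 𝕏 hpos (fun s hs => ⟨hs.1.2.1, hs.2⟩) h0
    rw [z1, z2]
    ring
  · apply mul_right_cancel₀ h0
    have r1 : M 𝕏 (fun s => (C u d s ∧ C z a s) ∧ C x c s) =
        M 𝕏 (fun s => C u d s ∧ C z a s ∧ C x c s) := M_congr 𝕏 (fun s => by tauto)
    have r2 : M 𝕏 (fun s => (C u d s ∧ C z a s ∧ C y b s) ∧ C x c s) =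
        M 𝕏 (fun s => C u d s ∧ (C z a s ∧ C x c s) ∧ C y b s) :=
      M_congr 𝕏 (fun s => by tauto)
    have r3 : M 𝕏 (fun s => (C z a s ∧ C x c s) ∧ C y b s) =
        M 𝕏 (fun s => C x c s ∧ C z a s ∧ C y b s) := M_congr 𝕏 (fun s => by tauto)
    have r4 : M 𝕏 (fun s => C z a s ∧ C x c s) =
        M 𝕏 (fun s => C x c s ∧ C z a s) := M_congr 𝕏 (fun s => by tauto)
    have hh2 := h2' c
    have hh1 := h1 c a b
    rw [r1, r2]
    rw [r3] at hh2
    calc M 𝕏 (fun s => C u d s ∧ C z a s ∧ C x c s) * M 𝕏 (fun s => C z a s ∧ C y b s) *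
          M 𝕏 (fun s => C z a s ∧ C x c s)
        = M 𝕏 (fun s => C u d s ∧ C z a s ∧ C x c s) * M 𝕏 (fun s => C x c s ∧ C z a s) *
          M 𝕏 (fun s => C z a s ∧ C y b s) := by rw [r4]; ring
      _ = M 𝕏 (fun s => C u d s ∧ C z a s ∧ C x c s) *
          (M 𝕏 (fun s => C x c s ∧ C z a s) * M 𝕏 (fun s => C z a s ∧ C y b s)) := by ring
      _ = M 𝕏 (fun s => C u d s ∧ C z a s ∧ C x c s) *
          (M 𝕏 (fun s => C x c s ∧ C z a s ∧ C y b s) * M 𝕏 (C z a)) := by rw [hh1]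
      _ = (M 𝕏 (fun s => C u d s ∧ C z a s ∧ C x c s) *
          M 𝕏 (fun s => C x c s ∧ C z a s ∧ C y b s)) * M 𝕏 (C z a) := by ring
      _ = (M 𝕏 (fun s => C u d s ∧ (C z a s ∧ C x c s) ∧ C y b s) *
          M 𝕏 (fun s => C z a s ∧ C x c s)) * M 𝕏 (C z a) := by rw [hh2]
      _ = M 𝕏 (fun s => C u d s ∧ (C z a s ∧ C x c s) ∧ C y b s) * M 𝕏 (C z a) *
          M 𝕏 (fun s => C z a s ∧ C x c s) := by ring


/-- (9) Exchange -/
lemma ax9 (hpos : ∀ s, 0 ≤ 𝕏 s) {k l m p : ℕ} (x : Fin k → V) (y : Fin l → V)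
    (z : Fin m → V) (u : Fin p → V)
    (h1 : PCI 𝕏 x z y) (h2 : PCI 𝕏 (Fin.append x y) z u) :
    PCI 𝕏 x z (Fin.append y u) := by
  rw [PCI_iff] at h1 h2 ⊢
  intro c a f
  rw [M_congr 𝕏 (fun s => and_congr_right' (C_append y u f s)),
    M_congr 𝕏 (fun s => and_congr_right' (and_congr_right' (C_append y u f s)))]
  set b : Fin l → A := fun j => f (Fin.castAdd p j) with hb_def
  set d : Fin p → A := fun j => f (Fin.natAdd l j) with hd_def
  have h2' : M 𝕏 (fun s => C x c s ∧ C z a s ∧ C y b s) *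
      M 𝕏 (fun s => C z a s ∧ C u d s) =
      M 𝕏 (fun s => C x c s ∧ C z a s ∧ C y b s ∧ C u d s) * M 𝕏 (C z a) := by
    have h0 := h2 (Fin.append c b) a d
    rw [M_congr 𝕏 (show ∀ s, (C (Fin.append x y) (Fin.append c b) s ∧ C z a s) ↔
          (C x c s ∧ C z a s ∧ C y b s) from fun s => by rw [C_append']; tauto),
      M_congr 𝕏 (show ∀ s, (C (Fin.append x y) (Fin.append c b) s ∧ C z a s ∧ C u d s) ↔
          (C x c s ∧ C z a s ∧ C y b s ∧ C u d s) from fun s => by rw [C_append']; tauto)]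
      at h0
    exact h0
  have h3 : M 𝕏 (fun s => C z a s ∧ C y b s) * M 𝕏 (fun s => C z a s ∧ C u d s) =
      M 𝕏 (fun s => C z a s ∧ C y b s ∧ C u d s) * M 𝕏 (C z a) := by
    rw [M_split 𝕏 (fun s => C z a s ∧ C y b s) x,
      M_split 𝕏 (fun s => C z a s ∧ C y b s ∧ C u d s) x, Finset.sum_mul, Finset.sum_mul]
    apply Finset.sum_congr rfl
    intro c' _
    have h0 := h2 (Fin.append c' b) a d
    rw [M_congr 𝕏 (show ∀ s, (C (Fin.append x y) (Fin.append c' b) s ∧ C z a s) ↔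
          ((C z a s ∧ C y b s) ∧ C x c' s) from fun s => by rw [C_append']; tauto),
      M_congr 𝕏 (show ∀ s, (C (Fin.append x y) (Fin.append c' b) s ∧ C z a s ∧ C u d s) ↔
          ((C z a s ∧ C y b s ∧ C u d s) ∧ C x c' s) from fun s => by rw [C_append']; tauto)]
      at h0
    exact h0
  by_cases hS : M 𝕏 (C z a) = 0
  · have z1 : M 𝕏 (fun s => C x c s ∧ C z a s) = 0 :=
      M_le_zero 𝕏 hpos (fun s hs => hs.2) hS
    rw [z1, hS]
    ring
  · apply mul_right_cancel₀ hS
    have h1c := h1 c a b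
    linear_combination (-(M 𝕏 (fun s => C x c s ∧ C z a s))) * h3 +
      M 𝕏 (fun s => C z a s ∧ C u d s) * h1c + M 𝕏 (C z a) * h2'


/-- (8) Second transitivity -/
lemma ax8 (hpos : ∀ s, 0 ≤ 𝕏 s) {k l m p : ℕ} (x : Fin k → V) (y : Fin l → V)
    (z : Fin m → V) (u : Fin p → V)
    (h1 : PCI 𝕏 y z y) (h2 : PCI 𝕏 (Fin.append z x) y u) : PCI 𝕏 x z u := by
  rw [PCI_iff] at h1 h2 ⊢
  intro c a d
  have h2' : ∀ (a' : Fin m → A) (c' : Fin k → A) (b : Fin l → A) (d' : Fin p → A),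
      M 𝕏 (fun s => (C z a' s ∧ C x c' s) ∧ C y b s) *
        M 𝕏 (fun s => C y b s ∧ C u d' s) =
      M 𝕏 (fun s => (C z a' s ∧ C x c' s) ∧ C y b s ∧ C u d' s) * M 𝕏 (C y b) := by
    intro a' c' b d'
    have h0 := h2 (Fin.append a' c') b d'
    rw [M_congr 𝕏 (fun s => and_congr_left' (C_append' z x a' c' s)),
      M_congr 𝕏 (fun s => and_congr_left' (C_append' z x a' c' s))] at h0
    exact h0
  by_cases hZ : M 𝕏 (C z a) = 0
  · have z1 : M 𝕏 (fun s => C x c s ∧ C z a s) = 0 :=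
      M_le_zero 𝕏 hpos (fun s hs => hs.2) hZ
    rw [z1, hZ]
    ring
  · have hsplit := M_split 𝕏 (C z a) y
    obtain ⟨b₀, -, hb₀⟩ := Finset.exists_ne_zero_of_sum_ne_zero (by rw [← hsplit]; exact hZ)
    have hzero : ∀ b', b' ≠ b₀ → M 𝕏 (fun s => C z a s ∧ C y b' s) = 0 := by
      intro b' hb'
      have hfalse : M 𝕏 (fun s => C y b' s ∧ C z a s ∧ C y b₀ s) = 0 :=
        M_of_false 𝕏 (fun s hs => C_ne y hb' s ⟨hs.1, hs.2.2⟩)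
      have h0 := h1 b' a b₀
      rw [hfalse, zero_mul] at h0
      rcases mul_eq_zero.1 h0 with h' | h'
      · rw [M_congr 𝕏 (show ∀ s, (C z a s ∧ C y b' s) ↔ (C y b' s ∧ C z a s) from
          fun s => by tauto)]
        exact h'
      · exact absurd h' hb₀
    have cond : ∀ P : (V → A) → Prop,
        M 𝕏 (fun s => C z a s ∧ P s) = M 𝕏 (fun s => (C z a s ∧ C y b₀ s) ∧ P s) := by
      intro P
      rw [M_split 𝕏 (fun s => C z a s ∧ P s) y, Finset.sum_eq_single b₀]
      · exact M_congr 𝕏 (fun s => by tauto)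
      · intro b' _ hb'
        exact M_le_zero 𝕏 hpos (fun s hs => ⟨hs.1.1, hs.2⟩) (hzero b' hb')
      · simp
    have e0 : M 𝕏 (C z a) = M 𝕏 (fun s => C z a s ∧ C y b₀ s) := by
      rw [hsplit, Finset.sum_eq_single b₀]
      · intro b' _ hb'
        exact hzero b' hb'
      · simp
    have e1 : M 𝕏 (fun s => C x c s ∧ C z a s) =
        M 𝕏 (fun s => (C z a s ∧ C x c s) ∧ C y b₀ s) := by
      rw [M_congr 𝕏 (show ∀ s, (C x c s ∧ C z a s) ↔ (C z a s ∧ C x c s) from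
        fun s => by tauto), cond (fun s => C x c s)]
      exact M_congr 𝕏 (fun s => by tauto)
    have e2 : M 𝕏 (fun s => C z a s ∧ C u d s) =
        M 𝕏 (fun s => (C z a s ∧ C y b₀ s) ∧ C u d s) := cond (fun s => C u d s)
    have e3 : M 𝕏 (fun s => C x c s ∧ C z a s ∧ C u d s) =
        M 𝕏 (fun s => (C z a s ∧ C x c s) ∧ C y b₀ s ∧ C u d s) := by
      rw [M_congr 𝕏 (show ∀ s, (C x c s ∧ C z a s ∧ C u d s) ↔
          (C z a s ∧ C x c s ∧ C u d s) from fun s => by tauto),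
        cond (fun s => C x c s ∧ C u d s)]
      exact M_congr 𝕏 (fun s => by tauto)
    have h3 : M 𝕏 (fun s => C z a s ∧ C y b₀ s) * M 𝕏 (fun s => C y b₀ s ∧ C u d s) =
        M 𝕏 (fun s => (C z a s ∧ C y b₀ s) ∧ C u d s) * M 𝕏 (C y b₀) := by
      rw [M_split 𝕏 (fun s => C z a s ∧ C y b₀ s) x,
        M_split 𝕏 (fun s => (C z a s ∧ C y b₀ s) ∧ C u d s) x,
        Finset.sum_mul, Finset.sum_mul]
      apply Finset.sum_congr rfl
      intro c' _
      have h0 := h2' a c' b₀ d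
      rw [M_congr 𝕏 (show ∀ s, ((C z a s ∧ C y b₀ s) ∧ C x c' s) ↔
          ((C z a s ∧ C x c' s) ∧ C y b₀ s) from fun s => by tauto),
        M_congr 𝕏 (show ∀ s, (((C z a s ∧ C y b₀ s) ∧ C u d s) ∧ C x c' s) ↔
          ((C z a s ∧ C x c' s) ∧ C y b₀ s ∧ C u d s) from fun s => by tauto)]
      exact h0
    have hG4pos : 0 < M 𝕏 (fun s => C z a s ∧ C y b₀ s) :=
      lt_of_le_of_ne (M_nonneg 𝕏 hpos _) (Ne.symm hb₀)
    have hMY : M 𝕏 (C y b₀) ≠ 0 := by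
      have := M_mono 𝕏 hpos (show ∀ s, (C z a s ∧ C y b₀ s) → C y b₀ s from
        fun s hs => hs.2)
      intro h0
      rw [h0] at this
      linarith
    rw [e0, e1, e2, e3]
    apply mul_right_cancel₀ hMY
    have h2c := h2' a c b₀ d
    linear_combination (-(M 𝕏 (fun s => (C z a s ∧ C x c s) ∧ C y b₀ s))) * h3 +
      M 𝕏 (fun s => C z a s ∧ C y b₀ s) * h2c

end Axioms

end PCIproof

/-- The probabilistic conditional independence atom satisfies the axioms of the
independence atom: constancy, reflexivity, symmetry, weakening, permutation,
fixed parameter, first and second transitivity, and exchange. -/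
theorem pci_satisfies_independence_axioms
    {V A : Type} [Fintype V] [DecidableEq V] [Fintype A] [Nonempty V] [Nonempty A]
    (𝕏 : (V → A) → ℝ) (hpos : ∀ s, 0 ≤ 𝕏 s) (hsum : ∑ s, 𝕏 s = 1) :
    -- (1) Constancy
    (∀ (k l m : ℕ) (x : Fin k → V) (y : Fin l → V) (z : Fin m → V),
      PCI 𝕏 y x y → PCI 𝕏 y x z) ∧
    -- (2) Reflexivity
    (∀ (k l : ℕ) (x : Fin k → V) (y : Fin l → V), PCI 𝕏 x x y) ∧
    -- (3) Symmetry
    (∀ (k l m : ℕ) (x : Fin k → V) (y : Fin l → V) (z : Fin m → V),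
      PCI 𝕏 z x y → PCI 𝕏 y x z) ∧
    -- (4) Weakening
    (∀ (k l m : ℕ) (x : Fin k → V) (y : Fin l → V) (z : Fin m → V) (y' z' : V),
      PCI 𝕏 (Fin.snoc y y') x (Fin.snoc z z') → PCI 𝕏 y x z) ∧
    -- (5) Permutation
    (∀ (k l m : ℕ) (x : Fin k → V) (y : Fin l → V) (z : Fin m → V)
      (πx : Equiv.Perm (Fin k)) (πy : Equiv.Perm (Fin l)) (πz : Equiv.Perm (Fin m)),
      PCI 𝕏 y x z → PCI 𝕏 (y ∘ πy) (x ∘ πx) (z ∘ πz)) ∧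
    -- (6) Fixed Parameter
    (∀ (k l m : ℕ) (x : Fin k → V) (y : Fin l → V) (z : Fin m → V),
      PCI 𝕏 z x y → PCI 𝕏 (Fin.append y x) x (Fin.append z x)) ∧
    -- (7) First Transitivity
    (∀ (k l m p : ℕ) (x : Fin k → V) (y : Fin l → V) (z : Fin m → V) (u : Fin p → V),
      PCI 𝕏 x z y → PCI 𝕏 u (Fin.append z x) y → PCI 𝕏 u z y) ∧
    -- (8) Second Transitivity
    (∀ (k l m p : ℕ) (x : Fin k → V) (y : Fin l → V) (z : Fin m → V) (u : Fin p → V),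
      PCI 𝕏 y z y → PCI 𝕏 (Fin.append z x) y u → PCI 𝕏 x z u) ∧
    -- (9) Exchange
    (∀ (k l m p : ℕ) (x : Fin k → V) (y : Fin l → V) (z : Fin m → V) (u : Fin p → V),
      PCI 𝕏 x z y → PCI 𝕏 (Fin.append x y) z u → PCI 𝕏 x z (Fin.append y u)) := by
  refine ⟨fun k l m x y z h => PCIproof.ax1 𝕏 hpos x y z h,
    fun k l x y => PCIproof.ax2 𝕏 x y,
    fun k l m x y z h => PCIproof.ax3 𝕏 x y z h,
    fun k l m x y z y' z' h => PCIproof.ax4 𝕏 hpos x y z y' z' h,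
    fun k l m x y z πx πy πz h => PCIproof.ax5 𝕏 x y z πx πy πz h,
    fun k l m x y z h => PCIproof.ax6 𝕏 x y z h,
    fun k l m p x y z u h1 h2 => PCIproof.ax7 𝕏 hpos x y z u h1 h2,
    fun k l m p x y z u h1 h2 => PCIproof.ax8 𝕏 hpos x y z u h1 h2,
    fun k l m p x y z u h1 h2 => PCIproof.ax9 𝕏 hpos x y z u h1 h2⟩
end

section
/- Let 𝕏 be a probabilistic team and let u, v, w be tuples of variables. If 𝕏 satisfies the probabilistic conditional independence atom u ⟂⟂_v w, then the support of 𝕏 satisfies the possibilistic independence atom u ⟂_v w. -/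
/-- A team `X` satisfies the possibilistic independence atom `u ⟂_v w`. -/
def PossIndep {V A : Type} (X : Set (V → A))
    {k l m : ℕ} (u : Fin k → V) (v : Fin l → V) (w : Fin m → V) : Prop :=
  ∀ s ∈ X, ∀ s' ∈ X, (∀ j, s (v j) = s' (v j)) →
    ∃ s'' ∈ X, (∀ j, s'' (u j) = s (u j)) ∧ (∀ j, s'' (v j) = s (v j)) ∧
      (∀ j, s'' (w j) = s' (w j))

open Classical in
lemma marg_nonneg {V A : Type} [Fintype V] [Fintype A]
    (𝕏 : (V → A) → ℝ) (hpos : ∀ s, 0 ≤ 𝕏 s) {k : ℕ} (u : Fin k → V) (a : Fin k → A) :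
    0 ≤ marg 𝕏 u a :=
  Finset.sum_nonneg fun s _ => hpos s

open Classical in
lemma marg_pos {V A : Type} [Fintype V] [Fintype A]
    (𝕏 : (V → A) → ℝ) (hpos : ∀ s, 0 ≤ 𝕏 s) {k : ℕ} (u : Fin k → V) (a : Fin k → A)
    (s : V → A) (hs : 0 < 𝕏 s) (hmatch : ∀ j, s (u j) = a j) :
    0 < marg 𝕏 u a := by
  apply lt_of_lt_of_le hs
  apply Finset.single_le_sum (f := 𝕏) (fun t _ => hpos t)
  simp [hmatch]

open Classical in
lemma exists_pos_of_marg_pos {V A : Type} [Fintype V] [Fintype A]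
    (𝕏 : (V → A) → ℝ) {k : ℕ} (u : Fin k → V) (a : Fin k → A)
    (hm : 0 < marg 𝕏 u a) :
    ∃ s, 0 < 𝕏 s ∧ ∀ j, s (u j) = a j := by
  by_contra hc
  push_neg at hc
  have : marg 𝕏 u a ≤ 0 := by
    apply Finset.sum_nonpos
    intro s hs
    simp only [Finset.mem_filter, Finset.mem_univ, true_and] at hs
    by_contra hp
    push_neg at hp
    exact absurd (hc s hp) (by push_neg; exact hs)
  linarith

/-- If a probabilistic team satisfies the probabilistic conditional independence
atom `u ⟂⟂_v w`, then its support satisfies the possibilistic independence atom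
`u ⟂_v w`. -/
theorem pci_implies_possIndep_on_support
    {V A : Type} [Fintype V] [DecidableEq V] [Fintype A] [Nonempty V] [Nonempty A]
    (𝕏 : (V → A) → ℝ) (hpos : ∀ s, 0 ≤ 𝕏 s) (hsum : ∑ s, 𝕏 s = 1)
    {k l m : ℕ} (u : Fin k → V) (v : Fin l → V) (w : Fin m → V)
    (h : PCI 𝕏 u v w) :
    PossIndep {s | 0 < 𝕏 s} u v w := by
  intro s hs s' hs' hv
  set a : Fin k → A := fun j => s (u j)
  set b : Fin l → A := fun j => s (v j)
  set c : Fin m → A := fun j => s' (w j)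
  have h1 : 0 < marg 𝕏 (Fin.append u v) (Fin.append a b) := by
    refine marg_pos 𝕏 hpos _ _ s hs fun j => ?_
    induction j using Fin.addCases with
    | left i => simp only [Fin.append_left, a]
    | right i => simp only [Fin.append_right, b]
  have h2 : 0 < marg 𝕏 (Fin.append v w) (Fin.append b c) := by
    refine marg_pos 𝕏 hpos _ _ s' hs' fun j => ?_
    induction j using Fin.addCases with
    | left i => simp only [Fin.append_left, b]; exact (hv i).symm
    | right i => simp only [Fin.append_right, c]
  have hprod : 0 < marg 𝕏 (Fin.append (Fin.append u v) w)
      (Fin.append (Fin.append a b) c) * marg 𝕏 v b := by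
    rw [← h a b c]; positivity
  have h3 : 0 < marg 𝕏 (Fin.append (Fin.append u v) w)
      (Fin.append (Fin.append a b) c) :=
    lt_of_le_of_ne (marg_nonneg 𝕏 hpos _ _) (by
      intro he
      rw [← he] at hprod
      simp at hprod)
  obtain ⟨t, ht, hmatch⟩ := exists_pos_of_marg_pos 𝕏 _ _ h3
  refine ⟨t, ht, ?_, ?_, ?_⟩
  · intro j
    have := hmatch (Fin.castAdd m (Fin.castAdd l j))
    simpa [Fin.append_left] using this
  · intro j
    have := hmatch (Fin.castAdd m (Fin.natAdd k j))
    simpa [Fin.append_left, Fin.append_right, b] using this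
  · intro j
    have := hmatch (Fin.natAdd (k + l) j)
    simpa [Fin.append_right, c] using this
end
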